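/- Let φ ∈ L^∞(𝕋). If the adjoint V_φ* of the slant H-Toeplitz operator V_φ is an isometry on H² (equivalently V_φ V_φ* = I), then Σ_{n∈ℤ} |φ̂(n)|² = 1, i.e. the L²-norm of φ equals 1. -/

import Mathlib

/-! The vector `g = V_φ* e₀` is a unit vector of `H²`, and `⟪e_k, g⟫ = conj φ̂(-m)` whenever
`K e_k = e_m`, because `W* e₀ = e₀` and `e₀ ∈ H²` make `⟪e₀, V_φ f⟫ = ⟪e₀, M_φ K f⟫`.
As `K` maps `(e_k)_{k ≥ 0}` bijectively onto `(e_m)_{m ∈ ℤ}`, Parseval's identity for `g`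
reads `Σ_{n ∈ ℤ} |φ̂(n)|² = ‖g‖² = 1`. -/

open scoped ComplexInnerProductSpace InnerProductSpace

open ContinuousLinearMap

theorem Equiv.intEquivNat_symm_two_mul (n : ℕ) : Equiv.intEquivNat.symm (2 * n) = n := by
  rw [Equiv.symm_apply_eq]
  rfl

theorem Equiv.intEquivNat_symm_two_mul_add_one (n : ℕ) :
    Equiv.intEquivNat.symm (2 * n + 1) = -(n : ℤ) - 1 := by
  rw [Equiv.symm_apply_eq, show -(n : ℤ) - 1 = Int.negSucc n by omega]
  rfl

theorem eq_comp_intEquivNat_symm {α : Type*} {f : ℕ → α} {b : ℤ → α}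
    (h : ∀ n : ℕ, f (2 * n) = b n ∧ f (2 * n + 1) = b (-(n : ℤ) - 1)) (k : ℕ) :
    f k = b (Equiv.intEquivNat.symm k) := by
  obtain ⟨n, rfl | rfl⟩ := Nat.even_or_odd' k
  · rw [(h n).1, Equiv.intEquivNat_symm_two_mul]
  · rw [(h n).2, Equiv.intEquivNat_symm_two_mul_add_one]

theorem hasSum_natCast_comp_equiv_iff {α β : Type*} [AddCommMonoid α] [TopologicalSpace α]
    {f : ℤ → α} {a : α} (σ : β ≃ ℕ) (hf : ∀ i < 0, f i = 0) :
    HasSum (fun b => f (σ b)) a ↔ HasSum f a := by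
  refine (Nat.cast_injective.comp σ.injective).hasSum_iff fun i hi => hf i ?_
  by_contra! hi0
  exact hi ⟨σ.symm i.toNat, by simp [hi0]⟩

section InnerProductSpace

variable {ι 𝕜 E : Type*} [RCLike 𝕜] [NormedAddCommGroup E] [InnerProductSpace 𝕜 E]

theorem inner_eq_zero_of_mem_closure_span {f : ι → E} {v x : E} (hv : ∀ i, ⟪v, f i⟫_𝕜 = 0)
    (hx : x ∈ (Submodule.span 𝕜 (Set.range f)).topologicalClosure) : ⟪v, x⟫_𝕜 = 0 := by
  have hle : (Submodule.span 𝕜 (Set.range f)).topologicalClosure ≤ (𝕜 ∙ v)ᗮ :=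
    Submodule.topologicalClosure_minimal _
      (Submodule.span_le.mpr <| Set.range_subset_iff.mpr fun i =>
        Submodule.mem_orthogonal_singleton_iff_inner_right.mpr (hv i))
      (Submodule.isClosed_orthogonal _)
  exact Submodule.mem_orthogonal_singleton_iff_inner_right.mp (hle hx)

theorem inner_apply_orthogonalProjectionOnto_of_adjoint_apply_eq [CompleteSpace E]
    {U : Submodule 𝕜 E} [U.HasOrthogonalProjection] {W : E →L[𝕜] E} {u : U}
    (hWu : adjoint W u = u) (y : E) :
    ⟪(u : E), W (U.orthogonalProjectionOnto y)⟫_𝕜 = ⟪(u : E), y⟫_𝕜 := by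
  rw [← adjoint_inner_left, hWu, ← Submodule.coe_inner,
    Submodule.inner_orthogonalProjectionOnto_eq_of_mem_left]

theorem ContinuousLinearMap.norm_adjoint_apply_of_comp_adjoint_eq_id {F : Type*}
    [NormedAddCommGroup F] [InnerProductSpace 𝕜 F] [CompleteSpace E] [CompleteSpace F]
    {V : E →L[𝕜] F} (hV : V ∘L adjoint V = ContinuousLinearMap.id 𝕜 F) (x : F) :
    ‖adjoint V x‖ = ‖x‖ :=
  (adjoint V).norm_map_iff_adjoint_comp_self.mpr (by rw [adjoint_adjoint, hV]; rfl) x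

namespace HilbertBasis

theorem ext_inner_left (b : HilbertBasis ι 𝕜 E) {x y : E} (h : ∀ i, ⟪b i, x⟫_𝕜 = ⟪b i, y⟫_𝕜) :
    x = y :=
  b.repr.injective <| lp.ext <| funext fun i => by simp only [b.repr_apply_apply, h]

theorem hasSum_norm_inner_sq (b : HilbertBasis ι 𝕜 E) (x : E) :
    HasSum (fun i => ‖⟪b i, x⟫_𝕜‖ ^ 2) (‖x‖ ^ 2) := by
  simp_rw [← b.repr_apply_apply, ← b.repr.norm_map x]
  apply_mod_cast lp.hasSum_norm (by simp) (b.repr x)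

theorem adjoint_apply_zero_of_apply_two_mul [CompleteSpace E] (e : HilbertBasis ℤ 𝕜 E)
    {W : E →L[𝕜] E} (hW : ∀ n : ℤ, W (e (2 * n)) = e n ∧ W (e (2 * n + 1)) = 0) :
    adjoint W (e 0) = e 0 := by
  have he := orthonormal_iff_ite.mp e.orthonormal
  refine e.ext_inner_left fun k => ?_
  rw [adjoint_inner_right]
  obtain ⟨n, rfl | rfl⟩ := Int.even_or_odd' k
  · simp [(hW n).1, he]
  · rw [(hW n).2, inner_zero_left, he, if_neg (by omega)]

end HilbertBasis

end InnerProductSpace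

/-- If `V_φ*` is an isometry (equivalently `V_φ V_φ* = I`), then
`Σ_{n ∈ ℤ} |φ̂(n)|² = 1`. -/
theorem sum_sq_fourierCoeffs_eq_one_of_adjoint_isometry
    {L2 : Type*} [NormedAddCommGroup L2] [InnerProductSpace ℂ L2] [CompleteSpace L2]
    -- the orthonormal (Fourier) basis `e n ↔ zⁿ` of `L²(𝕋)`
    (e : HilbertBasis ℤ ℂ L2)
    -- the Hardy space `H²`, the closed linear span of `{e n : n ≥ 0}`
    (H2 : Submodule ℂ L2) [CompleteSpace H2]
    (hH2 : H2 = (Submodule.span ℂ (Set.range fun n : ℕ => e (n : ℤ))).topologicalClosure)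
    (eH : ℕ → H2) (heH : ∀ n : ℕ, (eH n : L2) = e (n : ℤ))
    -- the operator `W`: `W e_{2n} = e n`, `W e_{2n+1} = 0` for all `n ∈ ℤ`
    (W : L2 →L[ℂ] L2)
    (hW : ∀ n : ℤ, W (e (2 * n)) = e n ∧ W (e (2 * n + 1)) = 0)
    -- the operator `K : H² → L²`: `K e_{2n} = e n`, `K e_{2n+1} = e_{-n-1}` for all `n ≥ 0`
    (K : H2 →L[ℂ] L2)
    (hK : ∀ n : ℕ, K (eH (2 * n)) = e (n : ℤ) ∧ K (eH (2 * n + 1)) = e (-(n : ℤ) - 1))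
    -- `φ ∈ L^∞`, encoded by its Fourier coefficients `a` and multiplication operator `M = M_φ`
    (a : ℤ → ℂ) (M : L2 →L[ℂ] L2)
    (hM : ∀ i j : ℤ, ⟪e i, M (e j)⟫ = a (i - j))
    -- the slant H-Toeplitz operator `V_φ = W P M_φ K : H² → H²`
    (V : H2 →L[ℂ] H2)
    (hV : ∀ f : H2, (V f : L2) = W ↑(Submodule.orthogonalProjection H2 (M (K f))))
    (hiso : V.comp (ContinuousLinearMap.adjoint V) = ContinuousLinearMap.id ℂ H2) :
    HasSum (fun n : ℤ => ‖a n‖ ^ 2) 1 := by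
  set g : H2 := adjoint V (eH 0)
  have hV' : ∀ f : H2, (V f : L2) = W (H2.orthogonalProjectionOnto (M (K f))) := hV
  have he0 : (eH 0 : L2) = e 0 := heH 0
  have hg : ‖(g : L2)‖ = 1 := by
    rw [Submodule.norm_coe, norm_adjoint_apply_of_comp_adjoint_eq_id hiso, ← Submodule.norm_coe,
      he0, e.orthonormal.norm_eq_one]
  have hW0 : adjoint W (eH 0 : L2) = eH 0 := by
    rw [he0, e.adjoint_apply_zero_of_apply_two_mul hW]
  have hcoef : ∀ k : ℕ, ⟪e k, (g : L2)⟫ = starRingEnd ℂ (a (-Equiv.intEquivNat.symm k)) := by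
    intro k
    calc ⟪e k, (g : L2)⟫ = ⟪eH k, adjoint V (eH 0)⟫ := by rw [Submodule.coe_inner, heH]
      _ = starRingEnd ℂ ⟪(eH 0 : L2), V (eH k)⟫ := by
        rw [adjoint_inner_right, ← inner_conj_symm, Submodule.coe_inner]
      _ = starRingEnd ℂ ⟪(eH 0 : L2), M (K (eH k))⟫ := by
        rw [hV', inner_apply_orthogonalProjectionOnto_of_adjoint_apply_eq hW0]
      _ = starRingEnd ℂ (a (-Equiv.intEquivNat.symm k)) := by
        rw [he0, eq_comp_intEquivNat_symm (f := fun k => K (eH k)) hK, hM, zero_sub]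
  have hneg : ∀ i < 0, ‖⟪e i, (g : L2)⟫‖ ^ 2 = 0 := fun i hi => by
    have hgH2 : (g : L2) ∈ (Submodule.span ℂ (Set.range fun n : ℕ => e n)).topologicalClosure :=
      hH2 ▸ g.2
    rw [inner_eq_zero_of_mem_closure_span
      (fun n : ℕ => e.orthonormal.inner_eq_zero (by omega)) hgH2, norm_zero, zero_pow two_ne_zero]
  have hParseval := e.hasSum_norm_inner_sq (g : L2)
  rw [hg, one_pow] at hParseval
  refine ((hasSum_natCast_comp_equiv_iff ((Equiv.neg ℤ).trans Equiv.intEquivNat) hneg).mpr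
    hParseval).congr_fun fun n => ?_
  simp [hcoef]
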